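/- Let C₀(Q) ⊆ A be a central non-degenerate inclusion and E : A → C₀(Q) a conditional expectation. Then for every a ∈ A the function q ↦ p^E_q(a) is lower semicontinuous on Q, i.e. for every s > 0 the set {q ∈ Q : p^E_q(a) > s} is open. -/

import Mathlib

open scoped ComplexOrder
open ZeroAtInfty

/-- The seminorm `p^E_q` from the GNS representation of the state `ev_q ∘ E`:
`p^E_q(a)² = sup { (ev_q∘E)(x* a* a x) / (ev_q∘E)(x* x) : (ev_q∘E)(x* x) > 0 }`
(with value `0` when the set is empty). -/
noncomputable def pE {Q : Type*} [TopologicalSpace Q]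
    {A : Type*} [NonUnitalCStarAlgebra A]
    (E : A →L[ℂ] C₀(Q, ℂ)) (q : Q) (a : A) : ℝ :=
  Real.sqrt (sSup {r : ℝ | ∃ x : A, 0 < (E (star x * x) q).re ∧
    r = (E (star x * (star a * a) * x) q).re / (E (star x * x) q).re})

/-- `p^unif_q(a) = inf {‖f a‖ : f ∈ C₀(Q), 0 ≤ f ≤ 1, f q = 1}`, the quotient seminorm of
`A / J^unif_q`. -/
noncomputable def punif {Q : Type*} [TopologicalSpace Q] [LocallyCompactSpace Q] [T2Space Q]
    {A : Type*} [NonUnitalCStarAlgebra A]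
    (ι : C₀(Q, ℂ) →⋆ₙₐ[ℂ] A) (q : Q) (a : A) : ℝ :=
  sInf {r : ℝ | ∃ f : C₀(Q, ℂ), (∀ x : Q, 0 ≤ f x ∧ f x ≤ 1) ∧ f q = 1 ∧ r = ‖ι f * a‖}

/-!
`p^E_q(a)²` is the supremum over `x` of `E(x* a* a x)(q) / E(x* x)(q)`, so `{q | s < p^E_q(a)}`
is the union over `x` of the open sets `{q | 0 < E(x* x)(q), s² E(x* x)(q) < E(x* a* a x)(q)}`.
This needs the ratios to be bounded above (`sSup` of an unbounded set of reals is `0`), which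
follows from positivity of `E` and `x* (a* a) x ≤ ‖a* a‖ x* x`.
-/

section

variable {Q : Type*} [TopologicalSpace Q] {A : Type*} [NonUnitalCStarAlgebra A]
  [PartialOrder A] [StarOrderedRing A] {E : A →L[ℂ] C₀(Q, ℂ)}

lemma re_apply_star_mul_mul_le (hEpos : ∀ a : A, 0 ≤ a → ∀ q : Q, 0 ≤ E a q) {b : A}
    (hb : IsSelfAdjoint b) (x : A) (q : Q) :
    (E (star x * b * x) q).re ≤ ‖b‖ * (E (star x * x) q).re := by
  have hle : 0 ≤ ‖b‖ • (star x * x) - star x * b * x :=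
    sub_nonneg.mpr (CStarAlgebra.star_left_conjugate_le_norm_smul hb)
  have := (Complex.le_def.mp (hEpos _ hle q)).1
  simp only [← Complex.coe_smul, map_sub, map_smul] at this
  simpa using this

lemma lt_pE_iff (hEpos : ∀ a : A, 0 ≤ a → ∀ q : Q, 0 ≤ E a q) {s : ℝ} (hs : 0 < s)
    (q : Q) (a : A) :
    s < pE E q a ↔ ∃ x : A, 0 < (E (star x * x) q).re ∧
      s ^ 2 * (E (star x * x) q).re < (E (star x * (star a * a) * x) q).re := by
  set S : Set ℝ := {r : ℝ | ∃ x : A, 0 < (E (star x * x) q).re ∧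
    r = (E (star x * (star a * a) * x) q).re / (E (star x * x) q).re} with hS
  have hbdd : BddAbove S := by
    refine ⟨‖star a * a‖, ?_⟩
    rintro _ ⟨x, hx, rfl⟩
    exact (div_le_iff₀ hx).mpr (re_apply_star_mul_mul_le hEpos (.star_mul_self a) x q)
  rw [pE, Real.lt_sqrt hs.le, ← hS]
  constructor
  · intro h
    have hne : S.Nonempty := by
      by_contra hne
      rw [Set.not_nonempty_iff_eq_empty.mp hne, Real.sSup_empty] at h
      exact (pow_pos hs 2).not_gt h
    obtain ⟨_, ⟨x, hx, rfl⟩, hlt⟩ := (lt_csSup_iff hbdd hne).mp h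
    exact ⟨x, hx, (lt_div_iff₀ hx).mp hlt⟩
  · rintro ⟨x, hx, hlt⟩
    exact ((lt_div_iff₀ hx).mpr hlt).trans_le (le_csSup hbdd ⟨x, hx, rfl⟩)

end

theorem stmt10_general {Q : Type*} [TopologicalSpace Q]
    {A : Type*} [NonUnitalCStarAlgebra A] [PartialOrder A] [StarOrderedRing A]
    (E : A →L[ℂ] C₀(Q, ℂ))
    (hEpos : ∀ a : A, 0 ≤ a → ∀ q : Q, 0 ≤ E a q) :
    ∀ a : A, ∀ s : ℝ, 0 < s → IsOpen {q : Q | s < pE E q a} := by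
  intro a s hs
  have hunion : {q : Q | s < pE E q a} = ⋃ x : A, {q : Q | 0 < (E (star x * x) q).re ∧
      s ^ 2 * (E (star x * x) q).re < (E (star x * (star a * a) * x) q).re} := by
    ext q
    simp only [Set.mem_ofPred_eq, Set.mem_iUnion, lt_pE_iff hEpos hs]
  rw [hunion]
  refine isOpen_iUnion fun x => ?_
  have hre : ∀ b : A, Continuous fun q : Q => (E b q).re :=
    fun b => Complex.continuous_re.comp (map_continuous (E b))
  exact (isOpen_lt continuous_const (hre _)).inter
    (isOpen_lt (continuous_const.mul (hre _)) (hre _))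

/-- For a central non-degenerate inclusion `C₀(Q) ⊆ A` and a conditional
expectation `E : A → C₀(Q)`, each function `q ↦ p^E_q(a)` is lower semicontinuous:
the sets `{q : p^E_q(a) > s}`, `s > 0`, are open. -/
theorem stmt10 {Q : Type*} [TopologicalSpace Q] [LocallyCompactSpace Q] [T2Space Q]
    {A : Type*} [NonUnitalCStarAlgebra A] [PartialOrder A] [StarOrderedRing A]
    (ι : C₀(Q, ℂ) →⋆ₙₐ[ℂ] A) (hisom : Isometry ι)
    (hcentral : ∀ (f : C₀(Q, ℂ)) (a : A), ι f * a = a * ι f)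
    (hnondeg : closure
      (Submodule.span ℂ {x : A | ∃ (f : C₀(Q, ℂ)) (a : A), x = ι f * a} : Set A) = Set.univ)
    (E : A →L[ℂ] C₀(Q, ℂ))
    (hEnorm : ‖E‖ = 1)
    (hEproj : ∀ f : C₀(Q, ℂ), E (ι f) = f)
    (hEmod : ∀ (f₁ f₂ : C₀(Q, ℂ)) (a : A), E (ι f₁ * a * ι f₂) = f₁ * E a * f₂)
    (hEpos : ∀ a : A, 0 ≤ a → ∀ q : Q, 0 ≤ E a q) :
    ∀ a : A, ∀ s : ℝ, 0 < s → IsOpen {q : Q | s < pE E q a} :=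
  stmt10_general E hEpos
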